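/- arXiv:2205.15263 — 3 statements merged into one kernel-verified Lean document; each statement's English description precedes it below -/
import Mathlib

section
/- Monotonicity of the ENUM objective lower bound, case 1: if FN_S < P/2 and FP_S > N/2, then for any superset S₊ ⊇ S the objective ν(S₊) = P·FP_{S₊} + N·FN_{S₊} - 2·FP_{S₊}·FN_{S₊} satisfies ν(S₊) ≥ ν(S). -/
theorem enum_bound_case1 (P N a a' b b' : ℝ)
    (hP : 0 < P) (hN : 0 < N)
    (ha' : 0 ≤ a') (haa : a' ≤ a) (haP : a ≤ P)
    (hb : 0 ≤ b) (hbb : b ≤ b') (hbN : b' ≤ N)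
    (hcase1 : a < P / 2) (hcase2 : b > N / 2) :
    P * b' + N * a' - 2 * a' * b' ≥ P * b + N * a - 2 * a * b := by
  nlinarith [mul_nonneg (sub_nonneg.2 hbb) (by linarith : (0:ℝ) ≤ P - 2*a'),
    mul_nonneg (sub_nonneg.2 haa) (by linarith : (0:ℝ) ≤ 2*b - N)]
end

section
/- Monotonicity of the ENUM objective lower bound, case 2: if FN_S < P/2 and FP_S ≤ N/2, then for any superset S₊ ⊇ S, ν(S₊) ≥ P·FP_S. -/
theorem enum_bound_case2 (P N a a' b b' : ℝ)
    (hP : 0 < P) (hN : 0 < N)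
    (ha' : 0 ≤ a') (haa : a' ≤ a) (haP : a ≤ P)
    (hb : 0 ≤ b) (hbb : b ≤ b') (hbN : b' ≤ N)
    (hcase1 : a < P / 2) (hcase2 : b ≤ N / 2) :
    P * b' + N * a' - 2 * a' * b' ≥ P * b := by
  nlinarith [mul_nonneg ha' (by linarith : (0:ℝ) ≤ N - 2*b), mul_le_mul_of_nonneg_left hbb (le_of_lt (by linarith : (0:ℝ) < P - 2*a'))]
end

section
/- Monotonicity of the ENUM objective lower bound, case 3: if FN_S ≥ P/2 and FP_S > N/2, then for any superset S₊ ⊇ S, ν(S₊) ≥ N·(P - FN_S). -/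
theorem enum_bound_case3 (P N a a' b b' : ℝ)
    (hP : 0 < P) (hN : 0 < N)
    (ha' : 0 ≤ a') (haa : a' ≤ a) (haP : a ≤ P)
    (hb : 0 ≤ b) (hbb : b ≤ b') (hbN : b' ≤ N)
    (hcase1 : a ≥ P / 2) (hcase2 : b > N / 2) :
    P * b' + N * a' - 2 * a' * b' ≥ N * (P - a) := by
  rcases le_or_gt (2 * a') P with h | h
  · nlinarith
  · nlinarith
end
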